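/- arXiv:0810.1366 — 6 statements merged into one kernel-verified Lean document; each statement's English description precedes it below -/
import Mathlib

section
/- Let a1, a2, a3, b1, b3, c, t be real numbers with a1 + 2t·b1 ≠ 0 and a1·a2 = 1 + a3². Define a1′ = (a1·b1 + c·(1 − 3a3² − 4t·a3·b3))/(a1 + 2t·b1), a3′ = (a1·b3 − 2c·a2·(a3 + t·b3))/(a1 + 2t·b1), and a2′ = (2·a3·b3 − a2·b1 − c·a2²)/(a1 + 2t·b1). Then a1·a2′ + a1′·a2 = 2·a3·a3′. -/
theorem integrability_numerator_eq {R : Type*} [CommRing R] (a1 a2 a3 b1 b3 c t : R) :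
    a1 * (2 * a3 * b3 - a2 * b1 - c * a2 ^ 2)
        + (a1 * b1 + c * (1 - 3 * a3 ^ 2 - 4 * t * a3 * b3)) * a2
        - 2 * a3 * (a1 * b3 - 2 * c * a2 * (a3 + t * b3))
      = c * a2 * (1 + a3 ^ 2 - a1 * a2) := by
  ring

theorem stmt_8_general (a1 a2 a3 b1 b3 c t : ℝ)
    (halg : a1 * a2 = 1 + a3 ^ 2)
    (a1' a2' a3' : ℝ)
    (h1 : a1' = (a1 * b1 + c * (1 - 3 * a3 ^ 2 - 4 * t * a3 * b3)) / (a1 + 2 * t * b1))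
    (h3 : a3' = (a1 * b3 - 2 * c * a2 * (a3 + t * b3)) / (a1 + 2 * t * b1))
    (h2 : a2' = (2 * a3 * b3 - a2 * b1 - c * a2 ^ 2) / (a1 + 2 * t * b1)) :
    a1 * a2' + a1' * a2 = 2 * a3 * a3' := by
  have hnum := integrability_numerator_eq a1 a2 a3 b1 b3 c t
  rw [halg, sub_self, mul_zero] at hnum
  subst h1 h2 h3
  rw [← sub_eq_zero, ← zero_div (a1 + 2 * t * b1), ← hnum]
  ring

theorem stmt_8 (a1 a2 a3 b1 b3 c t : ℝ) (hden : a1 + 2 * t * b1 ≠ 0)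
    (halg : a1 * a2 = 1 + a3 ^ 2)
    (a1' a2' a3' : ℝ)
    (h1 : a1' = (a1 * b1 + c * (1 - 3 * a3 ^ 2 - 4 * t * a3 * b3)) / (a1 + 2 * t * b1))
    (h3 : a3' = (a1 * b3 - 2 * c * a2 * (a3 + t * b3)) / (a1 + 2 * t * b1))
    (h2 : a2' = (2 * a3 * b3 - a2 * b1 - c * a2 ^ 2) / (a1 + 2 * t * b1)) :
    a1 * a2' + a1' * a2 = 2 * a3 * a3' :=
  stmt_8_general a1 a2 a3 b1 b3 c t halg a1' a2' a3' h1 h3 h2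
end

section
/- Let n > 2 and let c : M → R be a function on a connected Riemannian manifold (M,g) of dimension n such that the curvature tensor satisfies R^h_{kij} = c·(δ^h_i·g_{kj} − δ^h_j·g_{ki}) at every point. Then c is constant (Schur's theorem). -/
set_option linter.unusedSectionVars false
set_option linter.unusedVariables false
set_option maxHeartbeats 1000000


open scoped BigOperators

/-- Partial derivative in the `i`-th coordinate direction. -/
noncomputable def pd {n : ℕ} (i : Fin n) (f : (Fin n → ℝ) → ℝ) (x : Fin n → ℝ) : ℝ :=
  fderiv ℝ f x (Pi.single i 1)

/-- Christoffel symbols `Γ^k_{ij}` of the metric `g` (with `ginv` its inverse). -/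
noncomputable def christoffel {n : ℕ} (g ginv : (Fin n → ℝ) → Matrix (Fin n) (Fin n) ℝ)
    (k i j : Fin n) (x : Fin n → ℝ) : ℝ :=
  (1 / 2) * ∑ l, ginv x k l *
    (pd i (fun y => g y l j) x + pd j (fun y => g y l i) x - pd l (fun y => g y i j) x)

/-- Curvature tensor components `R^h_{kij}` of the Levi-Civita connection of `g`. -/
noncomputable def curvature {n : ℕ} (g ginv : (Fin n → ℝ) → Matrix (Fin n) (Fin n) ℝ)
    (h k i j : Fin n) (x : Fin n → ℝ) : ℝ :=
  pd i (christoffel g ginv h j k) x - pd j (christoffel g ginv h i k) x +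
    ∑ l, (christoffel g ginv h i l x * christoffel g ginv l j k x -
          christoffel g ginv h j l x * christoffel g ginv l i k x)

namespace Schur

variable {n : ℕ} {s : Set (Fin n → ℝ)} {f g : (Fin n → ℝ) → ℝ} {x : Fin n → ℝ}

lemma pd_congr (hs : IsOpen s) (h : Set.EqOn f g s) (hx : x ∈ s) (i : Fin n) :
    pd i f x = pd i g x := by
  unfold pd
  rw [Filter.EventuallyEq.fderiv_eq (Filter.eventuallyEq_of_mem (hs.mem_nhds hx) h)]

lemma diffAt (hs : IsOpen s) (hf : ContDiffOn ℝ (⊤ : ℕ∞) f s) (hx : x ∈ s) :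
    DifferentiableAt ℝ f x :=
  (hf.contDiffAt (hs.mem_nhds hx)).differentiableAt (by simp)

lemma smooth_pd (hs : IsOpen s) (hf : ContDiffOn ℝ (⊤ : ℕ∞) f s) (i : Fin n) :
    ContDiffOn ℝ (⊤ : ℕ∞) (pd i f) s :=
  (hf.fderiv_of_isOpen hs (by simp)).clm_apply contDiffOn_const

lemma pd_add (hf : DifferentiableAt ℝ f x) (hg : DifferentiableAt ℝ g x) (i : Fin n) :
    pd i (fun y => f y + g y) x = pd i f x + pd i g x := by
  unfold pd; rw [fderiv_fun_add hf hg]; rfl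

lemma pd_sub (hf : DifferentiableAt ℝ f x) (hg : DifferentiableAt ℝ g x) (i : Fin n) :
    pd i (fun y => f y - g y) x = pd i f x - pd i g x := by
  unfold pd; rw [fderiv_fun_sub hf hg]; rfl

lemma pd_mul (hf : DifferentiableAt ℝ f x) (hg : DifferentiableAt ℝ g x) (i : Fin n) :
    pd i (fun y => f y * g y) x = pd i f x * g x + f x * pd i g x := by
  unfold pd; rw [fderiv_fun_mul hf hg]
  simp [ContinuousLinearMap.add_apply, ContinuousLinearMap.smul_apply]
  ring

lemma pd_const_mul (hg : DifferentiableAt ℝ g x) (a : ℝ) (i : Fin n) :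
    pd i (fun y => a * g y) x = a * pd i g x := by
  unfold pd; rw [fderiv_const_mul hg]; rfl

lemma pd_sum {ι : Type*} (u : Finset ι) {F : ι → (Fin n → ℝ) → ℝ}
    (hF : ∀ m ∈ u, DifferentiableAt ℝ (F m) x) (i : Fin n) :
    pd i (fun y => ∑ m ∈ u, F m y) x = ∑ m ∈ u, pd i (F m) x := by
  unfold pd; rw [fderiv_fun_sum hF, ContinuousLinearMap.sum_apply]

lemma pd_comm (hs : IsOpen s) (hf : ContDiffOn ℝ (⊤ : ℕ∞) f s) (hx : x ∈ s) (a b : Fin n) :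
    pd a (pd b f) x = pd b (pd a f) x := by
  have hsymm : IsSymmSndFDerivAt ℝ f x :=
    (hf.contDiffAt (hs.mem_nhds hx)).isSymmSndFDerivAt (by rw [minSmoothness_of_isRCLikeNormedField]; exact WithTop.coe_le_coe.mpr le_top)
  have hd : DifferentiableAt ℝ (fderiv ℝ f) x :=
    ((hf.fderiv_of_isOpen (m := (⊤ : ℕ∞)) hs (by simp)).contDiffAt (hs.mem_nhds hx)).differentiableAt (by simp)
  have key : ∀ v w, pd v (pd w f) x = fderiv ℝ (fderiv ℝ f) x (Pi.single v 1) (Pi.single w 1) := by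
    intro v w
    have h1 : HasFDerivAt (fun y => fderiv ℝ f y (Pi.single w 1))
        ((fderiv ℝ (fderiv ℝ f) x).flip (Pi.single w 1)) x := by
      have := hd.hasFDerivAt.clm_apply (hasFDerivAt_const (Pi.single w 1) x)
      simpa using this
    show fderiv ℝ (fun y => fderiv ℝ f y (Pi.single w 1)) x (Pi.single v 1) = _
    rw [h1.fderiv]; rfl
  rw [key a b, key b a]; exact hsymm _ _

section Geometry

variable (g ginv : (Fin n → ℝ) → Matrix (Fin n) (Fin n) ℝ)
variable (hs : IsOpen s)
  (hg : ∀ i j, ContDiffOn ℝ (⊤ : ℕ∞) (fun y => g y i j) s)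
  (hginv : ∀ i j, ContDiffOn ℝ (⊤ : ℕ∞) (fun y => ginv y i j) s)
  (hsymm : ∀ x ∈ s, (g x).IsSymm)
  (hinv : ∀ x ∈ s, g x * ginv x = 1)

include hs hg hginv in
lemma smooth_christoffel (k i j : Fin n) : ContDiffOn ℝ (⊤ : ℕ∞) (christoffel g ginv k i j) s := by
  unfold christoffel
  exact contDiffOn_const.mul (ContDiffOn.sum fun l _ => (hginv k l).mul
    (((smooth_pd hs (hg l j) i).add (smooth_pd hs (hg l i) j)).sub (smooth_pd hs (hg i j) l)))

include hs hg hginv in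
lemma smooth_curvature (h k i j : Fin n) : ContDiffOn ℝ (⊤ : ℕ∞) (curvature g ginv h k i j) s := by
  unfold curvature
  exact ((smooth_pd hs (smooth_christoffel g ginv hs hg hginv h j k) i).sub
      (smooth_pd hs (smooth_christoffel g ginv hs hg hginv h i k) j)).add
    (ContDiffOn.sum fun l _ =>
      ((smooth_christoffel g ginv hs hg hginv h i l).mul
        (smooth_christoffel g ginv hs hg hginv l j k)).sub
      ((smooth_christoffel g ginv hs hg hginv h j l).mul
        (smooth_christoffel g ginv hs hg hginv l i k)))

include hs hsymm in
lemma pd_g_symm (hx : x ∈ s) (l i j : Fin n) :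
    pd l (fun y => g y i j) x = pd l (fun y => g y j i) x :=
  pd_congr hs (fun y hy => ((hsymm y hy).apply i j).symm) hx l

include hs hsymm in
lemma christoffel_symm (hx : x ∈ s) (k i j : Fin n) :
    christoffel g ginv k i j x = christoffel g ginv k j i x := by
  unfold christoffel
  congr 1
  refine Finset.sum_congr rfl fun l _ => ?_
  rw [pd_g_symm g hs hsymm hx l i j]
  ring

include hinv in
lemma g_ginv (hx : x ∈ s) (j p : Fin n) :
    ∑ m, g x j m * ginv x m p = if j = p then 1 else 0 := by
  have := congrFun (congrFun (congrArg (fun M => (M : Matrix (Fin n) (Fin n) ℝ)) (hinv x hx)) j) p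
  simpa [Matrix.mul_apply, Matrix.one_apply] using this

include hinv in
lemma ginv_g (hx : x ∈ s) (j p : Fin n) :
    ∑ m, ginv x j m * g x m p = if j = p then 1 else 0 := by
  have h2 : ginv x * g x = 1 := mul_eq_one_comm.mp (hinv x hx)
  have := congrFun (congrFun (congrArg (fun M => (M : Matrix (Fin n) (Fin n) ℝ)) h2) j) p
  simpa [Matrix.mul_apply, Matrix.one_apply] using this

include hs hsymm hinv in
lemma contract_key (hx : x ∈ s) (D : Fin n → ℝ) (j : Fin n) :
    ∑ m, (∑ p, ginv x m p * D p) * g x m j = D j := by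
  have : ∀ m : Fin n, (∑ p, ginv x m p * D p) * g x m j
      = ∑ p, D p * (g x j m * ginv x m p) := by
    intro m
    rw [Finset.sum_mul]
    refine Finset.sum_congr rfl fun p _ => ?_
    rw [(hsymm x hx).apply j m]
    ring
  rw [Finset.sum_congr rfl fun m _ => this m, Finset.sum_comm]
  have : ∀ p : Fin n, ∑ m, D p * (g x j m * ginv x m p) = D p * (if j = p then 1 else 0) := by
    intro p
    rw [← Finset.mul_sum, g_ginv g ginv hinv hx j p]
  rw [Finset.sum_congr rfl fun p _ => this p]
  simp

include hs hg hginv hsymm hinv in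
lemma compat (hx : x ∈ s) (l k j : Fin n) :
    pd l (fun y => g y k j) x =
      ∑ m, (christoffel g ginv m l k x * g x m j + christoffel g ginv m l j x * g x k m) := by
  rw [Finset.sum_add_distrib]
  have e1 : ∀ (a b : Fin n), ∑ m, christoffel g ginv m l a x * g x m b
      = (1/2) * (pd l (fun y => g y b a) x + pd a (fun y => g y b l) x
          - pd b (fun y => g y l a) x) := by
    intro a b
    unfold christoffel
    have : ∀ m : Fin n, (1 / 2) * (∑ p, ginv x m p *
          (pd l (fun y => g y p a) x + pd a (fun y => g y p l) x - pd p (fun y => g y l a) x))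
            * g x m b
        = (1/2) * ((∑ p, ginv x m p *
          (pd l (fun y => g y p a) x + pd a (fun y => g y p l) x - pd p (fun y => g y l a) x))
            * g x m b) := by intro m; ring
    rw [Finset.sum_congr rfl fun m _ => this m, ← Finset.mul_sum,
      contract_key g ginv hs hsymm hinv hx
        (fun p => pd l (fun y => g y p a) x + pd a (fun y => g y p l) x
          - pd p (fun y => g y l a) x) b]
  have e2 : ∀ m : Fin n, christoffel g ginv m l j x * g x k m
      = christoffel g ginv m l j x * g x m k := by
    intro m; rw [(hsymm x hx).apply k m]
  rw [Finset.sum_congr rfl fun m _ => e2 m, e1 k j, e1 j k,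
    pd_g_symm g hs hsymm hx k j l, pd_g_symm g hs hsymm hx j l k,
    pd_g_symm g hs hsymm hx l j k]
  ring

include hs hg hginv in
lemma pd_curvature (hx : x ∈ s) (l h k i j : Fin n) :
    pd l (curvature g ginv h k i j) x =
      pd l (pd i (christoffel g ginv h j k)) x - pd l (pd j (christoffel g ginv h i k)) x
      + ∑ m, (pd l (christoffel g ginv h i m) x * christoffel g ginv m j k x
            + christoffel g ginv h i m x * pd l (christoffel g ginv m j k) x
            - (pd l (christoffel g ginv h j m) x * christoffel g ginv m i k x
            + christoffel g ginv h j m x * pd l (christoffel g ginv m i k) x)) := by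
  have dG : ∀ a b c : Fin n, DifferentiableAt ℝ (christoffel g ginv a b c) x :=
    fun a b c => diffAt hs (smooth_christoffel g ginv hs hg hginv a b c) hx
  have dpdG : ∀ (e a b c : Fin n), DifferentiableAt ℝ (pd e (christoffel g ginv a b c)) x :=
    fun e a b c => diffAt hs (smooth_pd hs (smooth_christoffel g ginv hs hg hginv a b c) e) hx
  have e0 : curvature g ginv h k i j = fun y =>
      (fun z => pd i (christoffel g ginv h j k) z - pd j (christoffel g ginv h i k) z) y
      + (fun z => ∑ m, (christoffel g ginv h i m z * christoffel g ginv m j k z -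
          christoffel g ginv h j m z * christoffel g ginv m i k z)) y := rfl
  have dF2 : ∀ m : Fin n, m ∈ Finset.univ → DifferentiableAt ℝ
      (fun z => christoffel g ginv h i m z * christoffel g ginv m j k z -
          christoffel g ginv h j m z * christoffel g ginv m i k z) x :=
    fun m _ => ((dG h i m).mul (dG m j k)).sub ((dG h j m).mul (dG m i k))
  have hA : DifferentiableAt ℝ
      (fun z => pd i (christoffel g ginv h j k) z - pd j (christoffel g ginv h i k) z) x :=
    (dpdG i h j k).sub (dpdG j h i k)
  have hB : DifferentiableAt ℝ (fun z => ∑ m, (christoffel g ginv h i m z *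
      christoffel g ginv m j k z - christoffel g ginv h j m z * christoffel g ginv m i k z)) x :=
    DifferentiableAt.fun_sum dF2
  rw [e0, pd_add hA hB, pd_sub (dpdG i h j k) (dpdG j h i k), pd_sum Finset.univ dF2]
  congr 1
  refine Finset.sum_congr rfl fun m _ => ?_
  rw [pd_sub ((dG h i m).fun_mul (dG m j k)) ((dG h j m).fun_mul (dG m i k)),
    pd_mul (dG h i m) (dG m j k), pd_mul (dG h j m) (dG m i k)]


lemma sum_antisymm {n : ℕ} (T : Fin n → Fin n → ℝ) (h : ∀ m p, T m p + T p m = 0) :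
    (∑ m : Fin n, ∑ p, T m p) = 0 := by
  have h2 : (∑ m : Fin n, ∑ p, T m p) + (∑ m : Fin n, ∑ p, T m p) = 0 := by
    nth_rewrite 2 [Finset.sum_comm]
    rw [← Finset.sum_add_distrib]
    calc (∑ m : Fin n, ((∑ p, T m p) + ∑ p, T p m))
        = ∑ m : Fin n, ∑ p, (T m p + T p m) := by
          refine Finset.sum_congr rfl fun m _ => ?_
          rw [← Finset.sum_add_distrib]
      _ = 0 := by simp [h]
  linarith

include hs hsymm in
lemma bianchi_summand (hx : x ∈ s) (h k l i j m : Fin n) :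
    (pd l (christoffel g ginv h i m) x * christoffel g ginv m j k x + christoffel g ginv h i m x * pd l (christoffel g ginv m j k) x - (pd l (christoffel g ginv h j m) x * christoffel g ginv m i k x + christoffel g ginv h j m x * pd l (christoffel g ginv m i k) x))
    + (pd i (christoffel g ginv h j m) x * christoffel g ginv m l k x + christoffel g ginv h j m x * pd i (christoffel g ginv m l k) x - (pd i (christoffel g ginv h l m) x * christoffel g ginv m j k x + christoffel g ginv h l m x * pd i (christoffel g ginv m j k) x))
    + (pd j (christoffel g ginv h l m) x * christoffel g ginv m i k x + christoffel g ginv h l m x * pd j (christoffel g ginv m i k) x - (pd j (christoffel g ginv h i m) x * christoffel g ginv m l k x + christoffel g ginv h i m x * pd j (christoffel g ginv m l k) x))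
    + (christoffel g ginv h l m x * (pd i (christoffel g ginv m j k) x - pd j (christoffel g ginv m i k) x + (∑ p, (christoffel g ginv m i p x * christoffel g ginv p j k x - christoffel g ginv m j p x * christoffel g ginv p i k x)))
      - christoffel g ginv m l k x * (pd i (christoffel g ginv h j m) x - pd j (christoffel g ginv h i m) x + (∑ p, (christoffel g ginv h i p x * christoffel g ginv p j m x - christoffel g ginv h j p x * christoffel g ginv p i m x)))
      - christoffel g ginv m l i x * (pd m (christoffel g ginv h j k) x - pd j (christoffel g ginv h m k) x + (∑ p, (christoffel g ginv h m p x * christoffel g ginv p j k x - christoffel g ginv h j p x * christoffel g ginv p m k x)))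
      - christoffel g ginv m l j x * (pd i (christoffel g ginv h m k) x - pd m (christoffel g ginv h i k) x + (∑ p, (christoffel g ginv h i p x * christoffel g ginv p m k x - christoffel g ginv h m p x * christoffel g ginv p i k x))))
    + (christoffel g ginv h i m x * (pd j (christoffel g ginv m l k) x - pd l (christoffel g ginv m j k) x + (∑ p, (christoffel g ginv m j p x * christoffel g ginv p l k x - christoffel g ginv m l p x * christoffel g ginv p j k x)))
      - christoffel g ginv m i k x * (pd j (christoffel g ginv h l m) x - pd l (christoffel g ginv h j m) x + (∑ p, (christoffel g ginv h j p x * christoffel g ginv p l m x - christoffel g ginv h l p x * christoffel g ginv p j m x)))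
      - christoffel g ginv m i j x * (pd m (christoffel g ginv h l k) x - pd l (christoffel g ginv h m k) x + (∑ p, (christoffel g ginv h m p x * christoffel g ginv p l k x - christoffel g ginv h l p x * christoffel g ginv p m k x)))
      - christoffel g ginv m i l x * (pd j (christoffel g ginv h m k) x - pd m (christoffel g ginv h j k) x + (∑ p, (christoffel g ginv h j p x * christoffel g ginv p m k x - christoffel g ginv h m p x * christoffel g ginv p j k x))))
    + (christoffel g ginv h j m x * (pd l (christoffel g ginv m i k) x - pd i (christoffel g ginv m l k) x + (∑ p, (christoffel g ginv m l p x * christoffel g ginv p i k x - christoffel g ginv m i p x * christoffel g ginv p l k x)))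
      - christoffel g ginv m j k x * (pd l (christoffel g ginv h i m) x - pd i (christoffel g ginv h l m) x + (∑ p, (christoffel g ginv h l p x * christoffel g ginv p i m x - christoffel g ginv h i p x * christoffel g ginv p l m x)))
      - christoffel g ginv m j l x * (pd m (christoffel g ginv h i k) x - pd i (christoffel g ginv h m k) x + (∑ p, (christoffel g ginv h m p x * christoffel g ginv p i k x - christoffel g ginv h i p x * christoffel g ginv p m k x)))
      - christoffel g ginv m j i x * (pd l (christoffel g ginv h m k) x - pd m (christoffel g ginv h l k) x + (∑ p, (christoffel g ginv h l p x * christoffel g ginv p m k x - christoffel g ginv h m p x * christoffel g ginv p l k x))))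
    = ∑ p, (christoffel g ginv h l m x * (christoffel g ginv m i p x * christoffel g ginv p j k x - christoffel g ginv m j p x * christoffel g ginv p i k x)
      - christoffel g ginv m l k x * (christoffel g ginv h i p x * christoffel g ginv p j m x - christoffel g ginv h j p x * christoffel g ginv p i m x)
      + christoffel g ginv h i m x * (christoffel g ginv m j p x * christoffel g ginv p l k x - christoffel g ginv m l p x * christoffel g ginv p j k x)
      - christoffel g ginv m i k x * (christoffel g ginv h j p x * christoffel g ginv p l m x - christoffel g ginv h l p x * christoffel g ginv p j m x)
      + christoffel g ginv h j m x * (christoffel g ginv m l p x * christoffel g ginv p i k x - christoffel g ginv m i p x * christoffel g ginv p l k x)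
      - christoffel g ginv m j k x * (christoffel g ginv h l p x * christoffel g ginv p i m x - christoffel g ginv h i p x * christoffel g ginv p l m x)) := by
  rw [christoffel_symm g ginv hs hsymm hx m i l,
      christoffel_symm g ginv hs hsymm hx m j l,
      christoffel_symm g ginv hs hsymm hx m j i]
  have e1 : (∑ p, (christoffel g ginv h l m x * (christoffel g ginv m i p x * christoffel g ginv p j k x - christoffel g ginv m j p x * christoffel g ginv p i k x)
      - christoffel g ginv m l k x * (christoffel g ginv h i p x * christoffel g ginv p j m x - christoffel g ginv h j p x * christoffel g ginv p i m x)
      + christoffel g ginv h i m x * (christoffel g ginv m j p x * christoffel g ginv p l k x - christoffel g ginv m l p x * christoffel g ginv p j k x)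
      - christoffel g ginv m i k x * (christoffel g ginv h j p x * christoffel g ginv p l m x - christoffel g ginv h l p x * christoffel g ginv p j m x)
      + christoffel g ginv h j m x * (christoffel g ginv m l p x * christoffel g ginv p i k x - christoffel g ginv m i p x * christoffel g ginv p l k x)
      - christoffel g ginv m j k x * (christoffel g ginv h l p x * christoffel g ginv p i m x - christoffel g ginv h i p x * christoffel g ginv p l m x))) = ∑ p, (christoffel g ginv h l m x * (christoffel g ginv m i p x * christoffel g ginv p j k x - christoffel g ginv m j p x * christoffel g ginv p i k x)
      - christoffel g ginv m l k x * (christoffel g ginv h i p x * christoffel g ginv p j m x - christoffel g ginv h j p x * christoffel g ginv p i m x)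
      - christoffel g ginv m l i x * (christoffel g ginv h m p x * christoffel g ginv p j k x - christoffel g ginv h j p x * christoffel g ginv p m k x)
      - christoffel g ginv m l j x * (christoffel g ginv h i p x * christoffel g ginv p m k x - christoffel g ginv h m p x * christoffel g ginv p i k x)
      + christoffel g ginv h i m x * (christoffel g ginv m j p x * christoffel g ginv p l k x - christoffel g ginv m l p x * christoffel g ginv p j k x)
      - christoffel g ginv m i k x * (christoffel g ginv h j p x * christoffel g ginv p l m x - christoffel g ginv h l p x * christoffel g ginv p j m x)
      - christoffel g ginv m i j x * (christoffel g ginv h m p x * christoffel g ginv p l k x - christoffel g ginv h l p x * christoffel g ginv p m k x)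
      - christoffel g ginv m l i x * (christoffel g ginv h j p x * christoffel g ginv p m k x - christoffel g ginv h m p x * christoffel g ginv p j k x)
      + christoffel g ginv h j m x * (christoffel g ginv m l p x * christoffel g ginv p i k x - christoffel g ginv m i p x * christoffel g ginv p l k x)
      - christoffel g ginv m j k x * (christoffel g ginv h l p x * christoffel g ginv p i m x - christoffel g ginv h i p x * christoffel g ginv p l m x)
      - christoffel g ginv m l j x * (christoffel g ginv h m p x * christoffel g ginv p i k x - christoffel g ginv h i p x * christoffel g ginv p m k x)
      - christoffel g ginv m i j x * (christoffel g ginv h l p x * christoffel g ginv p m k x - christoffel g ginv h m p x * christoffel g ginv p l k x)) :=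
    Finset.sum_congr rfl fun p _ => by ring
  have e2 : (∑ p, (christoffel g ginv h l m x * (christoffel g ginv m i p x * christoffel g ginv p j k x - christoffel g ginv m j p x * christoffel g ginv p i k x)
      - christoffel g ginv m l k x * (christoffel g ginv h i p x * christoffel g ginv p j m x - christoffel g ginv h j p x * christoffel g ginv p i m x)
      - christoffel g ginv m l i x * (christoffel g ginv h m p x * christoffel g ginv p j k x - christoffel g ginv h j p x * christoffel g ginv p m k x)
      - christoffel g ginv m l j x * (christoffel g ginv h i p x * christoffel g ginv p m k x - christoffel g ginv h m p x * christoffel g ginv p i k x)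
      + christoffel g ginv h i m x * (christoffel g ginv m j p x * christoffel g ginv p l k x - christoffel g ginv m l p x * christoffel g ginv p j k x)
      - christoffel g ginv m i k x * (christoffel g ginv h j p x * christoffel g ginv p l m x - christoffel g ginv h l p x * christoffel g ginv p j m x)
      - christoffel g ginv m i j x * (christoffel g ginv h m p x * christoffel g ginv p l k x - christoffel g ginv h l p x * christoffel g ginv p m k x)
      - christoffel g ginv m l i x * (christoffel g ginv h j p x * christoffel g ginv p m k x - christoffel g ginv h m p x * christoffel g ginv p j k x)
      + christoffel g ginv h j m x * (christoffel g ginv m l p x * christoffel g ginv p i k x - christoffel g ginv m i p x * christoffel g ginv p l k x)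
      - christoffel g ginv m j k x * (christoffel g ginv h l p x * christoffel g ginv p i m x - christoffel g ginv h i p x * christoffel g ginv p l m x)
      - christoffel g ginv m l j x * (christoffel g ginv h m p x * christoffel g ginv p i k x - christoffel g ginv h i p x * christoffel g ginv p m k x)
      - christoffel g ginv m i j x * (christoffel g ginv h l p x * christoffel g ginv p m k x - christoffel g ginv h m p x * christoffel g ginv p l k x))) =
      christoffel g ginv h l m x * (∑ p, (christoffel g ginv m i p x * christoffel g ginv p j k x - christoffel g ginv m j p x * christoffel g ginv p i k x))
      - christoffel g ginv m l k x * (∑ p, (christoffel g ginv h i p x * christoffel g ginv p j m x - christoffel g ginv h j p x * christoffel g ginv p i m x))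
      - christoffel g ginv m l i x * (∑ p, (christoffel g ginv h m p x * christoffel g ginv p j k x - christoffel g ginv h j p x * christoffel g ginv p m k x))
      - christoffel g ginv m l j x * (∑ p, (christoffel g ginv h i p x * christoffel g ginv p m k x - christoffel g ginv h m p x * christoffel g ginv p i k x))
      + christoffel g ginv h i m x * (∑ p, (christoffel g ginv m j p x * christoffel g ginv p l k x - christoffel g ginv m l p x * christoffel g ginv p j k x))
      - christoffel g ginv m i k x * (∑ p, (christoffel g ginv h j p x * christoffel g ginv p l m x - christoffel g ginv h l p x * christoffel g ginv p j m x))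
      - christoffel g ginv m i j x * (∑ p, (christoffel g ginv h m p x * christoffel g ginv p l k x - christoffel g ginv h l p x * christoffel g ginv p m k x))
      - christoffel g ginv m l i x * (∑ p, (christoffel g ginv h j p x * christoffel g ginv p m k x - christoffel g ginv h m p x * christoffel g ginv p j k x))
      + christoffel g ginv h j m x * (∑ p, (christoffel g ginv m l p x * christoffel g ginv p i k x - christoffel g ginv m i p x * christoffel g ginv p l k x))
      - christoffel g ginv m j k x * (∑ p, (christoffel g ginv h l p x * christoffel g ginv p i m x - christoffel g ginv h i p x * christoffel g ginv p l m x))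
      - christoffel g ginv m l j x * (∑ p, (christoffel g ginv h m p x * christoffel g ginv p i k x - christoffel g ginv h i p x * christoffel g ginv p m k x))
      - christoffel g ginv m i j x * (∑ p, (christoffel g ginv h l p x * christoffel g ginv p m k x - christoffel g ginv h m p x * christoffel g ginv p l k x))
    := by
      simp only [Finset.sum_sub_distrib, Finset.sum_add_distrib, ← Finset.mul_sum]
  rw [e1, e2]
  ring

include hs hg hginv hsymm in
lemma bianchi (hx : x ∈ s) (h k l i j : Fin n) :
    pd l (curvature g ginv h k i j) x + pd i (curvature g ginv h k j l) x
      + pd j (curvature g ginv h k l i) x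
    + ∑ m, (christoffel g ginv h l m x * curvature g ginv m k i j x
          - christoffel g ginv m l k x * curvature g ginv h m i j x
          - christoffel g ginv m l i x * curvature g ginv h k m j x
          - christoffel g ginv m l j x * curvature g ginv h k i m x)
    + ∑ m, (christoffel g ginv h i m x * curvature g ginv m k j l x
          - christoffel g ginv m i k x * curvature g ginv h m j l x
          - christoffel g ginv m i j x * curvature g ginv h k m l x
          - christoffel g ginv m i l x * curvature g ginv h k j m x)
    + ∑ m, (christoffel g ginv h j m x * curvature g ginv m k l i x
          - christoffel g ginv m j k x * curvature g ginv h m l i x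
          - christoffel g ginv m j l x * curvature g ginv h k m i x
          - christoffel g ginv m j i x * curvature g ginv h k l m x) = 0 := by
  rw [pd_curvature g ginv hs hg hginv hx l h k i j,
      pd_curvature g ginv hs hg hginv hx i h k j l,
      pd_curvature g ginv hs hg hginv hx j h k l i]
  simp only [curvature]
  rw [pd_comm hs (smooth_christoffel g ginv hs hg hginv h j k) hx i l,
      pd_comm hs (smooth_christoffel g ginv hs hg hginv h i k) hx j l,
      pd_comm hs (smooth_christoffel g ginv hs hg hginv h l k) hx j i]
  have hzero : (∑ m : Fin n, ∑ p, (christoffel g ginv h l m x * (christoffel g ginv m i p x * christoffel g ginv p j k x - christoffel g ginv m j p x * christoffel g ginv p i k x)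
      - christoffel g ginv m l k x * (christoffel g ginv h i p x * christoffel g ginv p j m x - christoffel g ginv h j p x * christoffel g ginv p i m x)
      + christoffel g ginv h i m x * (christoffel g ginv m j p x * christoffel g ginv p l k x - christoffel g ginv m l p x * christoffel g ginv p j k x)
      - christoffel g ginv m i k x * (christoffel g ginv h j p x * christoffel g ginv p l m x - christoffel g ginv h l p x * christoffel g ginv p j m x)
      + christoffel g ginv h j m x * (christoffel g ginv m l p x * christoffel g ginv p i k x - christoffel g ginv m i p x * christoffel g ginv p l k x)
      - christoffel g ginv m j k x * (christoffel g ginv h l p x * christoffel g ginv p i m x - christoffel g ginv h i p x * christoffel g ginv p l m x))) = 0 :=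
    sum_antisymm _ (fun m p => by ring)
  have final : (∑ m : Fin n, ((pd l (christoffel g ginv h i m) x * christoffel g ginv m j k x + christoffel g ginv h i m x * pd l (christoffel g ginv m j k) x - (pd l (christoffel g ginv h j m) x * christoffel g ginv m i k x + christoffel g ginv h j m x * pd l (christoffel g ginv m i k) x))
    + (pd i (christoffel g ginv h j m) x * christoffel g ginv m l k x + christoffel g ginv h j m x * pd i (christoffel g ginv m l k) x - (pd i (christoffel g ginv h l m) x * christoffel g ginv m j k x + christoffel g ginv h l m x * pd i (christoffel g ginv m j k) x))
    + (pd j (christoffel g ginv h l m) x * christoffel g ginv m i k x + christoffel g ginv h l m x * pd j (christoffel g ginv m i k) x - (pd j (christoffel g ginv h i m) x * christoffel g ginv m l k x + christoffel g ginv h i m x * pd j (christoffel g ginv m l k) x))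
    + (christoffel g ginv h l m x * (pd i (christoffel g ginv m j k) x - pd j (christoffel g ginv m i k) x + (∑ p, (christoffel g ginv m i p x * christoffel g ginv p j k x - christoffel g ginv m j p x * christoffel g ginv p i k x)))
      - christoffel g ginv m l k x * (pd i (christoffel g ginv h j m) x - pd j (christoffel g ginv h i m) x + (∑ p, (christoffel g ginv h i p x * christoffel g ginv p j m x - christoffel g ginv h j p x * christoffel g ginv p i m x)))
      - christoffel g ginv m l i x * (pd m (christoffel g ginv h j k) x - pd j (christoffel g ginv h m k) x + (∑ p, (christoffel g ginv h m p x * christoffel g ginv p j k x - christoffel g ginv h j p x * christoffel g ginv p m k x)))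
      - christoffel g ginv m l j x * (pd i (christoffel g ginv h m k) x - pd m (christoffel g ginv h i k) x + (∑ p, (christoffel g ginv h i p x * christoffel g ginv p m k x - christoffel g ginv h m p x * christoffel g ginv p i k x))))
    + (christoffel g ginv h i m x * (pd j (christoffel g ginv m l k) x - pd l (christoffel g ginv m j k) x + (∑ p, (christoffel g ginv m j p x * christoffel g ginv p l k x - christoffel g ginv m l p x * christoffel g ginv p j k x)))
      - christoffel g ginv m i k x * (pd j (christoffel g ginv h l m) x - pd l (christoffel g ginv h j m) x + (∑ p, (christoffel g ginv h j p x * christoffel g ginv p l m x - christoffel g ginv h l p x * christoffel g ginv p j m x)))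
      - christoffel g ginv m i j x * (pd m (christoffel g ginv h l k) x - pd l (christoffel g ginv h m k) x + (∑ p, (christoffel g ginv h m p x * christoffel g ginv p l k x - christoffel g ginv h l p x * christoffel g ginv p m k x)))
      - christoffel g ginv m i l x * (pd j (christoffel g ginv h m k) x - pd m (christoffel g ginv h j k) x + (∑ p, (christoffel g ginv h j p x * christoffel g ginv p m k x - christoffel g ginv h m p x * christoffel g ginv p j k x))))
    + (christoffel g ginv h j m x * (pd l (christoffel g ginv m i k) x - pd i (christoffel g ginv m l k) x + (∑ p, (christoffel g ginv m l p x * christoffel g ginv p i k x - christoffel g ginv m i p x * christoffel g ginv p l k x)))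
      - christoffel g ginv m j k x * (pd l (christoffel g ginv h i m) x - pd i (christoffel g ginv h l m) x + (∑ p, (christoffel g ginv h l p x * christoffel g ginv p i m x - christoffel g ginv h i p x * christoffel g ginv p l m x)))
      - christoffel g ginv m j l x * (pd m (christoffel g ginv h i k) x - pd i (christoffel g ginv h m k) x + (∑ p, (christoffel g ginv h m p x * christoffel g ginv p i k x - christoffel g ginv h i p x * christoffel g ginv p m k x)))
      - christoffel g ginv m j i x * (pd l (christoffel g ginv h m k) x - pd m (christoffel g ginv h l k) x + (∑ p, (christoffel g ginv h l p x * christoffel g ginv p m k x - christoffel g ginv h m p x * christoffel g ginv p l k x)))))) = 0 := by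
    rw [Finset.sum_congr rfl fun m _ => bianchi_summand g ginv hs hsymm hx h k l i j m]
    exact hzero
  rw [Finset.sum_add_distrib, Finset.sum_add_distrib, Finset.sum_add_distrib,
      Finset.sum_add_distrib, Finset.sum_add_distrib] at final
  linarith


include hs hg hginv hsymm hinv in
lemma block0 (hx : x ∈ s) (h k l i j : Fin n) :
    ((if h = i then (1:ℝ) else 0) * pd l (fun y => g y k j) x
       - (if h = j then (1:ℝ) else 0) * pd l (fun y => g y k i) x)
    + ∑ m, (christoffel g ginv h l m x *
              ((if m = i then (1:ℝ) else 0) * g x k j - (if m = j then (1:ℝ) else 0) * g x k i)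
          - christoffel g ginv m l k x *
              ((if h = i then (1:ℝ) else 0) * g x m j - (if h = j then (1:ℝ) else 0) * g x m i)
          - christoffel g ginv m l i x *
              ((if h = m then (1:ℝ) else 0) * g x k j - (if h = j then (1:ℝ) else 0) * g x k m)
          - christoffel g ginv m l j x *
              ((if h = i then (1:ℝ) else 0) * g x k m - (if h = m then (1:ℝ) else 0) * g x k i))
      = 0 := by
  rw [compat g ginv hs hg hginv hsymm hinv hx l k j, compat g ginv hs hg hginv hsymm hinv hx l k i]
  simp only [mul_ite, ite_mul, mul_one, one_mul, mul_zero, zero_mul, mul_sub, sub_mul, mul_add,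
    add_mul, Finset.sum_add_distrib, Finset.sum_sub_distrib, Finset.mul_sum,
    Finset.sum_ite_irrel, Finset.sum_ite_eq, Finset.sum_ite_eq', Finset.mem_univ, if_true,
    Finset.sum_const_zero, sub_zero, zero_sub, add_zero, zero_add]
  by_cases hhi : h = i <;> by_cases hhj : h = j
  · subst hhi; subst hhj; simp
  · subst hhi; simp [hhj]
    ring
  · subst hhj; simp [hhi]
    ring
  · simp [hhi, hhj]
    try ring

include hs hg hginv hsymm hinv in
lemma block (hx : x ∈ s) (C : ℝ) (h k l i j : Fin n) :
    C * ((if h = i then (1:ℝ) else 0) * pd l (fun y => g y k j) x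
       - (if h = j then (1:ℝ) else 0) * pd l (fun y => g y k i) x)
    + ∑ m, (christoffel g ginv h l m x *
              (C * ((if m = i then (1:ℝ) else 0) * g x k j - (if m = j then (1:ℝ) else 0) * g x k i))
          - christoffel g ginv m l k x *
              (C * ((if h = i then (1:ℝ) else 0) * g x m j - (if h = j then (1:ℝ) else 0) * g x m i))
          - christoffel g ginv m l i x *
              (C * ((if h = m then (1:ℝ) else 0) * g x k j - (if h = j then (1:ℝ) else 0) * g x k m))
          - christoffel g ginv m l j x *
              (C * ((if h = i then (1:ℝ) else 0) * g x k m - (if h = m then (1:ℝ) else 0) * g x k i)))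
      = 0 := by
  have e : ∀ m : Fin n, (christoffel g ginv h l m x *
              (C * ((if m = i then (1:ℝ) else 0) * g x k j - (if m = j then (1:ℝ) else 0) * g x k i))
          - christoffel g ginv m l k x *
              (C * ((if h = i then (1:ℝ) else 0) * g x m j - (if h = j then (1:ℝ) else 0) * g x m i))
          - christoffel g ginv m l i x *
              (C * ((if h = m then (1:ℝ) else 0) * g x k j - (if h = j then (1:ℝ) else 0) * g x k m))
          - christoffel g ginv m l j x *
              (C * ((if h = i then (1:ℝ) else 0) * g x k m - (if h = m then (1:ℝ) else 0) * g x k i)))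
      = C * (christoffel g ginv h l m x *
              ((if m = i then (1:ℝ) else 0) * g x k j - (if m = j then (1:ℝ) else 0) * g x k i)
          - christoffel g ginv m l k x *
              ((if h = i then (1:ℝ) else 0) * g x m j - (if h = j then (1:ℝ) else 0) * g x m i)
          - christoffel g ginv m l i x *
              ((if h = m then (1:ℝ) else 0) * g x k j - (if h = j then (1:ℝ) else 0) * g x k m)
          - christoffel g ginv m l j x *
              ((if h = i then (1:ℝ) else 0) * g x k m - (if h = m then (1:ℝ) else 0) * g x k i)) :=
    fun m => by ring
  rw [Finset.sum_congr rfl fun m _ => e m, ← Finset.mul_sum, ← mul_add,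
    block0 g ginv hs hg hginv hsymm hinv hx h k l i j, mul_zero]

include hs hg hginv hsymm hinv in
lemma schur_F (hx : x ∈ s) (c' : (Fin n → ℝ) → ℝ) (hc' : ContDiffOn ℝ (⊤ : ℕ∞) c' s)
    (hcv : ∀ y ∈ s, ∀ h k i j : Fin n, curvature g ginv h k i j y =
      c' y * ((if h = i then (1:ℝ) else 0) * g y k j - (if h = j then (1:ℝ) else 0) * g y k i))
    (h k l i j : Fin n) :
    pd l c' x * ((if h = i then (1:ℝ) else 0) * g x k j - (if h = j then (1:ℝ) else 0) * g x k i)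
    + pd i c' x * ((if h = j then (1:ℝ) else 0) * g x k l - (if h = l then (1:ℝ) else 0) * g x k j)
    + pd j c' x * ((if h = l then (1:ℝ) else 0) * g x k i - (if h = i then (1:ℝ) else 0) * g x k l)
      = 0 := by
  have hrw : ∀ a i' j' : Fin n, pd a (curvature g ginv h k i' j') x
      = pd a c' x * ((if h = i' then (1:ℝ) else 0) * g x k j'
          - (if h = j' then (1:ℝ) else 0) * g x k i')
      + c' x * ((if h = i' then (1:ℝ) else 0) * pd a (fun y => g y k j') x
          - (if h = j' then (1:ℝ) else 0) * pd a (fun y => g y k i') x) := by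
    intro a i' j'
    have heq : Set.EqOn (curvature g ginv h k i' j')
        (fun y => c' y * ((fun z => (if h = i' then (1:ℝ) else 0) * g z k j'
          - (if h = j' then (1:ℝ) else 0) * g z k i') y)) s := fun y hy => hcv y hy h k i' j'
    have d1 : DifferentiableAt ℝ (fun z => (if h = i' then (1:ℝ) else 0) * g z k j') x :=
      (diffAt hs (hg k j') hx).const_mul _
    have d2 : DifferentiableAt ℝ (fun z => (if h = j' then (1:ℝ) else 0) * g z k i') x :=
      (diffAt hs (hg k i') hx).const_mul _
    rw [pd_congr hs heq hx a, pd_mul (diffAt hs hc' hx) (d1.fun_sub d2),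
      pd_sub d1 d2, pd_const_mul (diffAt hs (hg k j') hx), pd_const_mul (diffAt hs (hg k i') hx)]
  have B := bianchi g ginv hs hg hginv hsymm hx h k l i j
  rw [hrw l i j, hrw i j l, hrw j l i] at B
  simp only [hcv x hx] at B
  have b1 := block g ginv hs hg hginv hsymm hinv hx (c' x) h k l i j
  have b2 := block g ginv hs hg hginv hsymm hinv hx (c' x) h k i j l
  have b3 := block g ginv hs hg hginv hsymm hinv hx (c' x) h k j l i
  linarith [B, b1, b2, b3]

include hs hg hginv hsymm hinv in
lemma pd_c_zero (hn : 2 < n) (hx : x ∈ s) (c' : (Fin n → ℝ) → ℝ) (hc' : ContDiffOn ℝ (⊤ : ℕ∞) c' s)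
    (hcv : ∀ y ∈ s, ∀ h k i j : Fin n, curvature g ginv h k i j y =
      c' y * ((if h = i then (1:ℝ) else 0) * g y k j - (if h = j then (1:ℝ) else 0) * g y k i))
    (l : Fin n) : pd l c' x = 0 := by
  have key : ∀ k j : Fin n, pd l c' x * g x k j = pd j c' x * g x k l := by
    intro k j
    have h2 : (∑ a : Fin n, (pd l c' x * ((if a = a then (1:ℝ) else 0) * g x k j
        - (if a = j then (1:ℝ) else 0) * g x k a)
      + pd a c' x * ((if a = j then (1:ℝ) else 0) * g x k l
        - (if a = l then (1:ℝ) else 0) * g x k j)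
      + pd j c' x * ((if a = l then (1:ℝ) else 0) * g x k a
        - (if a = a then (1:ℝ) else 0) * g x k l))) = 0 :=
      Finset.sum_eq_zero fun a _ =>
        schur_F g ginv hs hg hginv hsymm hinv hx c' hc' hcv a k l a j
    simp only [if_pos rfl, one_mul, mul_sub, mul_ite, ite_mul, mul_zero, zero_mul, mul_one,
      Finset.sum_add_distrib, Finset.sum_sub_distrib, Finset.sum_ite_eq, Finset.sum_ite_eq',
      Finset.sum_ite_irrel, Finset.mem_univ, if_true, Finset.sum_const, Finset.card_univ,
      Fintype.card_fin, nsmul_eq_mul, Finset.sum_const_zero] at h2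
    have hn' : (2:ℝ) < (n:ℝ) := by exact_mod_cast hn
    have h3 : ((n:ℝ) - 2) * (pd l c' x * g x k j - pd j c' x * g x k l) = 0 := by
      linear_combination h2
    have hne : ((n:ℝ) - 2) ≠ 0 := by intro h; rw [sub_eq_zero] at h; linarith
    have := (mul_eq_zero.mp h3).resolve_left hne
    linarith
  have h4 : (∑ j' : Fin n, ∑ k, ginv x j' k * (pd l c' x * g x k j'))
          = ∑ j' : Fin n, ∑ k, ginv x j' k * (pd j' c' x * g x k l) :=
    Finset.sum_congr rfl fun j' _ => Finset.sum_congr rfl fun k _ => by rw [key k j']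
  have hL : (∑ j' : Fin n, ∑ k, ginv x j' k * (pd l c' x * g x k j')) = (n:ℝ) * pd l c' x := by
    have e : ∀ j' : Fin n, (∑ k, ginv x j' k * (pd l c' x * g x k j')) = pd l c' x := by
      intro j'
      have e' : ∀ k : Fin n, ginv x j' k * (pd l c' x * g x k j')
          = pd l c' x * (ginv x j' k * g x k j') := fun k => by ring
      rw [Finset.sum_congr rfl fun k _ => e' k, ← Finset.mul_sum,
        ginv_g g ginv hinv hx j' j']
      simp
    rw [Finset.sum_congr rfl fun j' _ => e j']
    simp [Finset.sum_const, Finset.card_univ, mul_comm]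
  have hR : (∑ j' : Fin n, ∑ k, ginv x j' k * (pd j' c' x * g x k l)) = pd l c' x := by
    have e : ∀ j' : Fin n, (∑ k, ginv x j' k * (pd j' c' x * g x k l))
        = pd j' c' x * (if j' = l then 1 else 0) := by
      intro j'
      have e' : ∀ k : Fin n, ginv x j' k * (pd j' c' x * g x k l)
          = pd j' c' x * (ginv x j' k * g x k l) := fun k => by ring
      rw [Finset.sum_congr rfl fun k _ => e' k, ← Finset.mul_sum,
        ginv_g g ginv hinv hx j' l]
    rw [Finset.sum_congr rfl fun j' _ => e j']
    simp [Finset.sum_ite_eq', mul_ite]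
  rw [hL, hR] at h4
  have hn' : (2:ℝ) < (n:ℝ) := by exact_mod_cast hn
  have h5 : ((n:ℝ) - 1) * pd l c' x = 0 := by linear_combination h4
  have hne : ((n:ℝ) - 1) ≠ 0 := by intro h; rw [sub_eq_zero] at h; linarith
  exact (mul_eq_zero.mp h5).resolve_left hne


end Geometry

lemma fderiv_zero_of_pd_zero {f : (Fin n → ℝ) → ℝ} {x : Fin n → ℝ}
    (h : ∀ l : Fin n, pd l f x = 0) : fderiv ℝ f x = 0 := by
  ext v
  have hv : v = ∑ i : Fin n, Pi.single i (v i) := (Finset.univ_sum_single v).symm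
  rw [ContinuousLinearMap.zero_apply]
  conv_lhs => rw [hv]
  rw [map_sum]
  refine Finset.sum_eq_zero fun i _ => ?_
  have hsing : (Pi.single i (v i) : Fin n → ℝ) = v i • (Pi.single i (1:ℝ) : Fin n → ℝ) := by
    ext w; by_cases hw : w = i <;> simp [Pi.single_apply, hw]
  rw [hsing, map_smul]
  have h0 : fderiv ℝ f x (Pi.single i 1) = 0 := h i
  rw [h0, smul_zero]

end Schur

/-- Schur's theorem (in local coordinates): if on a connected open set the curvature
tensor is pointwise of constant-sectional-curvature form with factor `c`, and `n > 2`,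
then `c` is constant. -/
theorem stmt_10 {n : ℕ} (hn : 2 < n) (s : Set (Fin n → ℝ)) (hs : IsOpen s)
    (hconn : IsConnected s)
    (g ginv : (Fin n → ℝ) → Matrix (Fin n) (Fin n) ℝ) (c : (Fin n → ℝ) → ℝ)
    (hgsmooth : ∀ i j, ContDiffOn ℝ (⊤ : ℕ∞) (fun y => g y i j) s)
    (hginvsmooth : ∀ i j, ContDiffOn ℝ (⊤ : ℕ∞) (fun y => ginv y i j) s)
    (hpos : ∀ x ∈ s, (g x).PosDef)
    (hsymm : ∀ x ∈ s, (g x).IsSymm)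
    (hinv : ∀ x ∈ s, g x * ginv x = 1)
    (hcurv : ∀ x ∈ s, ∀ h k i j : Fin n,
      curvature g ginv h k i j x =
        c x * ((if h = i then (1:ℝ) else 0) * g x k j -
               (if h = j then (1:ℝ) else 0) * g x k i)) :
    ∀ x ∈ s, ∀ y ∈ s, c x = c y := by
  classical
  intro x hx y hy
  have hNne : ((n:ℝ) * ((n:ℝ) - 1)) ≠ 0 := by
    have : (2:ℝ) < (n:ℝ) := by exact_mod_cast hn
    intro hN
    rcases mul_eq_zero.mp hN with h1 | h1 <;> [linarith; (rw [sub_eq_zero] at h1; linarith)]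
  set c' : (Fin n → ℝ) → ℝ := fun z =>
    (∑ j, ∑ k, ginv z j k * ∑ i, curvature g ginv i k i j z) / ((n:ℝ) * ((n:ℝ) - 1))
    with hc'def
  have hc'eq : ∀ z ∈ s, c' z = c z := by
    intro z hz
    have inner : ∀ k j : Fin n, (∑ i, curvature g ginv i k i j z)
        = ((n:ℝ) - 1) * (c z * g z k j) := by
      intro k j
      simp only [hcurv z hz, eq_self_iff_true, if_true, one_mul, mul_one, mul_sub, mul_ite,
        ite_mul, mul_zero, zero_mul,
        Finset.sum_sub_distrib, Finset.sum_const, Finset.card_univ, Fintype.card_fin,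
        nsmul_eq_mul, Finset.sum_ite_eq, Finset.sum_ite_eq', Finset.mem_univ]
      ring
    have snd : ∀ j : Fin n, (∑ k, ginv z j k * (((n:ℝ) - 1) * (c z * g z k j)))
        = ((n:ℝ) - 1) * c z := by
      intro j
      have e' : ∀ k : Fin n, ginv z j k * (((n:ℝ) - 1) * (c z * g z k j))
          = (((n:ℝ) - 1) * c z) * (ginv z j k * g z k j) := fun k => by ring
      rw [Finset.sum_congr rfl fun k _ => e' k, ← Finset.mul_sum,
        Schur.ginv_g g ginv hinv hz j j]
      simp
    have e1 : ∀ j : Fin n, (∑ k, ginv z j k * ∑ i, curvature g ginv i k i j z)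
        = ((n:ℝ) - 1) * c z := by
      intro j
      calc (∑ k, ginv z j k * ∑ i, curvature g ginv i k i j z)
          = ∑ k, ginv z j k * (((n:ℝ) - 1) * (c z * g z k j)) :=
            Finset.sum_congr rfl fun k _ => by rw [inner k j]
        _ = ((n:ℝ) - 1) * c z := snd j
    show (∑ j, ∑ k, ginv z j k * ∑ i, curvature g ginv i k i j z) / ((n:ℝ) * ((n:ℝ) - 1)) = c z
    rw [Finset.sum_congr rfl fun j (_ : j ∈ Finset.univ) => e1 j,
      Finset.sum_const, Finset.card_univ, Fintype.card_fin, nsmul_eq_mul]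
    rw [← mul_assoc]
    exact mul_div_cancel_left₀ (c z) hNne
  have hc'sm : ContDiffOn ℝ (⊤ : ℕ∞) c' s := by
    apply ContDiffOn.div_const
    exact ContDiffOn.sum fun j _ => ContDiffOn.sum fun k _ => (hginvsmooth j k).mul
      (ContDiffOn.sum fun i _ => Schur.smooth_curvature g ginv hs hgsmooth hginvsmooth i k i j)
  have hcv : ∀ z ∈ s, ∀ h k i j : Fin n, curvature g ginv h k i j z =
      c' z * ((if h = i then (1:ℝ) else 0) * g z k j -
              (if h = j then (1:ℝ) else 0) * g z k i) := by
    intro z hz h k i j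
    rw [hcurv z hz h k i j, hc'eq z hz]
  have hpd : ∀ z ∈ s, ∀ l : Fin n, pd l c' z = 0 := fun z hz l =>
    Schur.pd_c_zero g ginv hs hgsmooth hginvsmooth hsymm hinv hn hz c' hc'sm hcv l
  have hfz : ∀ z ∈ s, fderiv ℝ c' z = 0 := fun z hz =>
    Schur.fderiv_zero_of_pd_zero (fun l => hpd z hz l)
  have hdiff : DifferentiableOn ℝ c' s := fun z hz =>
    (Schur.diffAt hs hc'sm hz).differentiableWithinAt
  have hlc : IsLocallyConstant (fun z : s => c' z) := by
    rw [IsLocallyConstant.iff_exists_open]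
    intro z
    obtain ⟨ε, hε, hball⟩ := Metric.isOpen_iff.mp hs z z.2
    refine ⟨Subtype.val ⁻¹' Metric.ball (z : Fin n → ℝ) ε,
      Metric.isOpen_ball.preimage continuous_subtype_val, by simp [hε], ?_⟩
    intro w hw
    have hw' : (w : Fin n → ℝ) ∈ Metric.ball (z : Fin n → ℝ) ε := hw
    exact Convex.is_const_of_fderivWithin_eq_zero (convex_ball _ _) (hdiff.mono hball)
      (fun u hu => by rw [fderivWithin_of_isOpen Metric.isOpen_ball hu]; exact hfz u (hball hu))
      hw' (Metric.mem_ball_self hε)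
  have : PreconnectedSpace s := Subtype.preconnectedSpace hconn.isPreconnected
  have hconst := hlc.apply_eq_of_preconnectedSpace ⟨x, hx⟩ ⟨y, hy⟩
  rw [← hc'eq x hx, ← hc'eq y hy]
  exact hconst
end

section
/- Let t ≥ 0 and real numbers a1, a2, a3, b1, b2, b3, λ, μ with λ > 0, λ + 2tμ > 0, a1 > 0, a2 > 0, a1+2t·b1 > 0, a2+2t·b2 > 0, a1·a2 = 1+a3², and (a1+2t·b1)(a2+2t·b2) = 1+(a3+2t·b3)². Define c_i = λ·a_i, d_i = λ·b_i + μ·(a_i+2t·b_i). Then c1 + 2t·d1 > 0, c2 + 2t·d2 > 0, and (c1+2t·d1)(c2+2t·d2) − (c3+2t·d3)² > 0, i.e., the metric G defined by these coefficients is positive definite. -/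
/-!
With `s = λ + 2tμ`, each coefficient `cᵢ + 2t dᵢ` equals `s (aᵢ + 2t bᵢ)`, so the metric `G` is the
metric with coefficients `aᵢ + 2t bᵢ` scaled by `s > 0`; its determinant is `s² · 1 = s²` by the
almost-complex relation at time `t`.
-/

theorem mul_mul_mul_sub_mul_sq_eq_sq {x y z : ℝ} (s : ℝ) (h : x * y = 1 + z ^ 2) :
    s * x * (s * y) - (s * z) ^ 2 = s ^ 2 := by
  linear_combination s ^ 2 * h

theorem stmt_12_general (t a1 a2 a3 b1 b2 b3 lam mu : ℝ)
    (hlm : 0 < lam + 2 * t * mu)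
    (hb1 : 0 < a1 + 2 * t * b1) (hb2 : 0 < a2 + 2 * t * b2)
    (halg2 : (a1 + 2 * t * b1) * (a2 + 2 * t * b2) = 1 + (a3 + 2 * t * b3) ^ 2)
    (c1 c2 c3 d1 d2 d3 : ℝ)
    (hc1 : c1 = lam * a1) (hc2 : c2 = lam * a2) (hc3 : c3 = lam * a3)
    (hd1 : d1 = lam * b1 + mu * (a1 + 2 * t * b1))
    (hd2 : d2 = lam * b2 + mu * (a2 + 2 * t * b2))
    (hd3 : d3 = lam * b3 + mu * (a3 + 2 * t * b3)) :
    0 < c1 + 2 * t * d1 ∧ 0 < c2 + 2 * t * d2 ∧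
    0 < (c1 + 2 * t * d1) * (c2 + 2 * t * d2) - (c3 + 2 * t * d3) ^ 2 := by
  have hscale : ∀ a b : ℝ, lam * a + 2 * t * (lam * b + mu * (a + 2 * t * b)) =
      (lam + 2 * t * mu) * (a + 2 * t * b) := fun _ _ ↦ by ring
  subst hc1 hc2 hc3 hd1 hd2 hd3
  simp only [hscale]
  refine ⟨mul_pos hlm hb1, mul_pos hlm hb2, ?_⟩
  rw [mul_mul_mul_sub_mul_sq_eq_sq _ halg2]
  positivity

theorem stmt_12 (t a1 a2 a3 b1 b2 b3 lam mu : ℝ) (ht : 0 ≤ t)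
    (hlam : 0 < lam) (hlm : 0 < lam + 2 * t * mu)
    (ha1 : 0 < a1) (ha2 : 0 < a2)
    (hb1 : 0 < a1 + 2 * t * b1) (hb2 : 0 < a2 + 2 * t * b2)
    (halg1 : a1 * a2 = 1 + a3 ^ 2)
    (halg2 : (a1 + 2 * t * b1) * (a2 + 2 * t * b2) = 1 + (a3 + 2 * t * b3) ^ 2)
    (c1 c2 c3 d1 d2 d3 : ℝ)
    (hc1 : c1 = lam * a1) (hc2 : c2 = lam * a2) (hc3 : c3 = lam * a3)
    (hd1 : d1 = lam * b1 + mu * (a1 + 2 * t * b1))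
    (hd2 : d2 = lam * b2 + mu * (a2 + 2 * t * b2))
    (hd3 : d3 = lam * b3 + mu * (a3 + 2 * t * b3)) :
    0 < c1 + 2 * t * d1 ∧ 0 < c2 + 2 * t * d2 ∧
    0 < (c1 + 2 * t * d1) * (c2 + 2 * t * d2) - (c3 + 2 * t * d3) ^ 2 :=
  stmt_12_general t a1 a2 a3 b1 b2 b3 lam mu hlm hb1 hb2 halg2 c1 c2 c3 d1 d2 d3 hc1 hc2 hc3 hd1 hd2
    hd3
end

section
/- Let c, t, a1, a2, a3 and a1′, a2′, a3′ be real numbers with D := a1 − 2t·a1′ − 2c·t·a2 − 4c·t²·a2′ ≠ 0, and define b1 = (2c²t·a2² + 2ct·a1·a2′ + a1·a1′ − c + 3c·a3²)/D, b3 = (a1·a3′ + 2c·a2·a3 + 4ct·a2′·a3 − 2ct·a2·a3′)/D. Assume a1·a2 = 1+a3² and a1·a2′ + a1′·a2 = 2·a3·a3′ and a1 + 2t·b1 ≠ 0. Then a1′ = (a1·b1 + c·(1 − 3a3² − 4t·a3·b3))/(a1 + 2t·b1) and a3′ = (a1·b3 − 2c·a2·(a3 + t·b3))/(a1 + 2t·b1).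 -/
/-! Multiplied by `D`, each claimed identity (already cleared of the denominator `a1 + 2 t b1`)
becomes polynomial once `b1 D` and `b3 D` are replaced by their numerators, and the remainder
lies in the ideal generated by `a1 a2 - 1 - a3²` and its derivative. -/

section Integrability

variable {K : Type*} [Field K] {c t a1 a2 a3 a1' a2' a3' D b1 b3 : K}

theorem a1'_mul_eq_of_integrability
    (hD : D = a1 - 2 * t * a1' - 2 * c * t * a2 - 4 * c * t ^ 2 * a2') (hD0 : D ≠ 0)
    (hb1 : b1 * D = 2 * c ^ 2 * t * a2 ^ 2 + 2 * c * t * a1 * a2' + a1 * a1' - c +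
      3 * c * a3 ^ 2)
    (hb3 : b3 * D = a1 * a3' + 2 * c * a2 * a3 + 4 * c * t * a2' * a3 - 2 * c * t * a2 * a3')
    (halg : a1 * a2 = 1 + a3 ^ 2) (hdiff : a1 * a2' + a1' * a2 = 2 * a3 * a3') :
    a1' * (a1 + 2 * t * b1) = a1 * b1 + c * (1 - 3 * a3 ^ 2 - 4 * t * a3 * b3) :=
  mul_left_cancel₀ hD0 <| by
    subst hD
    linear_combination (2 * t * a1' - a1) * hb1 + 4 * c * t * a3 * hb3
      - (2 * c ^ 2 * t * a2 + 4 * c ^ 2 * t ^ 2 * a2') * halg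
      - (2 * c * t * a1 - 4 * c ^ 2 * t ^ 2 * a2) * hdiff

theorem a3'_mul_eq_of_integrability
    (hD : D = a1 - 2 * t * a1' - 2 * c * t * a2 - 4 * c * t ^ 2 * a2') (hD0 : D ≠ 0)
    (hb1 : b1 * D = 2 * c ^ 2 * t * a2 ^ 2 + 2 * c * t * a1 * a2' + a1 * a1' - c +
      3 * c * a3 ^ 2)
    (hb3 : b3 * D = a1 * a3' + 2 * c * a2 * a3 + 4 * c * t * a2' * a3 - 2 * c * t * a2 * a3')
    (halg : a1 * a2 = 1 + a3 ^ 2) (hdiff : a1 * a2' + a1' * a2 = 2 * a3 * a3') :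
    a3' * (a1 + 2 * t * b1) = a1 * b3 - 2 * c * a2 * (a3 + t * b3) :=
  mul_left_cancel₀ hD0 <| by
    subst hD
    linear_combination 2 * t * a3' * hb1 + (2 * c * t * a2 - a1) * hb3
      + 2 * c * t * a3' * halg - 4 * c * t * a3 * hdiff

end Integrability

theorem stmt_15 (c t a1 a2 a3 a1' a2' a3' : ℝ)
    (D : ℝ) (hD : D = a1 - 2 * t * a1' - 2 * c * t * a2 - 4 * c * t ^ 2 * a2')
    (hD0 : D ≠ 0)
    (b1 b3 : ℝ)
    (hb1 : b1 = (2 * c ^ 2 * t * a2 ^ 2 + 2 * c * t * a1 * a2' + a1 * a1' - c +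
      3 * c * a3 ^ 2) / D)
    (hb3 : b3 = (a1 * a3' + 2 * c * a2 * a3 + 4 * c * t * a2' * a3 -
      2 * c * t * a2 * a3') / D)
    (halg : a1 * a2 = 1 + a3 ^ 2)
    (hdiff : a1 * a2' + a1' * a2 = 2 * a3 * a3')
    (hden : a1 + 2 * t * b1 ≠ 0) :
    a1' = (a1 * b1 + c * (1 - 3 * a3 ^ 2 - 4 * t * a3 * b3)) / (a1 + 2 * t * b1) ∧
    a3' = (a1 * b3 - 2 * c * a2 * (a3 + t * b3)) / (a1 + 2 * t * b1) := by
  subst hb1 hb3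
  exact ⟨(eq_div_iff hden).2 <| a1'_mul_eq_of_integrability hD hD0 (div_mul_cancel₀ _ hD0)
      (div_mul_cancel₀ _ hD0) halg hdiff,
    (eq_div_iff hden).2 <| a3'_mul_eq_of_integrability hD hD0 (div_mul_cancel₀ _ hD0)
      (div_mul_cancel₀ _ hD0) halg hdiff⟩
end

section
/- Let n ≥ 1 and let g be a positive definite symmetric n×n matrix with inverse g⁻¹, p ∈ R^n, and real numbers c1, c2, c3, d1, d2, d3. Set t = (1/2)·pᵀg⁻¹p, and suppose c1+2t·d1 > 0, c2+2t·d2 > 0, and (c1+2t·d1)(c2+2t·d2) − (c3+2t·d3)² > 0, and also c1 > 0, c2 > 0, c1·c2 − c3² > 0. Then the 2n×2n symmetric matrix G with blocks G11 = c1·g + d1·p·pᵀ, G22 = c2·g⁻¹ + d2·(g⁻¹p)(g⁻¹p)ᵀ, G12 = G21ᵀ = c3·I + d3·p·(g⁻¹p)ᵀ is positive definite. -/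
/-!
Substituting `p = g q` and `dp = g w`, the quadratic form of `G` at `(x, dp)` is
`C ⊗ g + D ⊗ (g q)(g q)ᵀ` evaluated at `(x, w)`, with `C = [c₁ c₃; c₃ c₂]`, `D = [d₁ d₃; d₃ d₂]`.
Let `τ = qᵀ g q = pᵀ g⁻¹ p = 2t`. Projecting `τ x` and `τ w` `g`-orthogonally off `q` splits
`τ²` times this form into the `C ⊗ g` form of the projections plus `τ` times the form of
`C + τ D` at the two coordinates `qᵀ g x`, `qᵀ g w`. Both coefficient matrices are positive
definite, and the two parts vanish together only at `x = w = 0`.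
-/

open scoped Matrix

namespace LinearMap.BilinForm

variable {V : Type*} [AddCommGroup V] [Module ℝ V] (B : LinearMap.BilinForm ℝ V)

/-- The quadratic form of `C ⊗ B` on `V × V`, where `C = [c₁ c₃; c₃ c₂]`. -/
def pairForm (c₁ c₂ c₃ : ℝ) (x w : V) : ℝ :=
  c₁ * B x x + c₂ * B w w + 2 * c₃ * B x w

variable {B}

theorem mul_pairForm (hB : B.IsSymm) (c₁ c₂ c₃ : ℝ) (x w : V) :
    c₁ * B.pairForm c₁ c₂ c₃ x w =
      B (c₁ • x + c₃ • w) (c₁ • x + c₃ • w) + (c₁ * c₂ - c₃ ^ 2) * B w w := by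
  simp only [pairForm, map_add, map_smul, LinearMap.add_apply, LinearMap.smul_apply, smul_eq_mul,
    hB.eq w x]
  ring

theorem pairForm_nonneg (hB : B.IsSymm) (hQ : B.toQuadraticMap.PosDef) {c₁ c₂ c₃ : ℝ}
    (hc₁ : 0 < c₁) (hc : 0 < c₁ * c₂ - c₃ ^ 2) (x w : V) : 0 ≤ B.pairForm c₁ c₂ c₃ x w := by
  refine nonneg_of_mul_nonneg_right ?_ hc₁
  rw [mul_pairForm hB]
  exact add_nonneg (hQ.nonneg _) (mul_nonneg hc.le (hQ.nonneg w))

theorem pairForm_pos (hB : B.IsSymm) (hQ : B.toQuadraticMap.PosDef) {c₁ c₂ c₃ : ℝ}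
    (hc₁ : 0 < c₁) (hc : 0 < c₁ * c₂ - c₃ ^ 2) {x w : V} (hxw : x ≠ 0 ∨ w ≠ 0) :
    0 < B.pairForm c₁ c₂ c₃ x w := by
  refine pos_of_mul_pos_right ?_ hc₁.le
  rw [mul_pairForm hB]
  rcases eq_or_ne w 0 with rfl | hw
  · have hx : c₁ • x ≠ 0 := smul_ne_zero hc₁.ne' (hxw.resolve_right (not_not.2 rfl))
    simpa using hQ _ hx
  · exact add_pos_of_nonneg_of_pos (hQ.nonneg _) (mul_pos hc (hQ w hw))

theorem isSymm_mul : IsSymm (LinearMap.mul ℝ ℝ) :=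
  ⟨mul_comm⟩

theorem posDef_toQuadraticMap_mul :
    (LinearMap.BilinMap.toQuadraticMap (LinearMap.mul ℝ ℝ)).PosDef :=
  fun a ha => by simpa using mul_self_pos.2 ha

theorem sq_mul_pairForm_add_pairForm_mul (hB : B.IsSymm) (e x w : V) (c₁ c₂ c₃ d₁ d₂ d₃ : ℝ) :
    B e e ^ 2 * (B.pairForm c₁ c₂ c₃ x w + pairForm (LinearMap.mul ℝ ℝ) d₁ d₂ d₃ (B e x) (B e w)) =
      B.pairForm c₁ c₂ c₃ (B e e • x - B e x • e) (B e e • w - B e w • e) +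
        B e e * pairForm (LinearMap.mul ℝ ℝ) (c₁ + B e e * d₁) (c₂ + B e e * d₂)
          (c₃ + B e e * d₃) (B e x) (B e w) := by
  simp only [pairForm, map_sub, map_smul, LinearMap.sub_apply, LinearMap.smul_apply, smul_eq_mul,
    LinearMap.mul_apply', hB.eq x e, hB.eq w e]
  ring

theorem pairForm_add_pairForm_mul_pos (hB : B.IsSymm) (hQ : B.toQuadraticMap.PosDef) (e : V)
    {c₁ c₂ c₃ d₁ d₂ d₃ : ℝ} (hc₁ : 0 < c₁) (hc : 0 < c₁ * c₂ - c₃ ^ 2)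
    (hd₁ : 0 < c₁ + B e e * d₁)
    (hd : 0 < (c₁ + B e e * d₁) * (c₂ + B e e * d₂) - (c₃ + B e e * d₃) ^ 2)
    {x w : V} (hxw : x ≠ 0 ∨ w ≠ 0) :
    0 < B.pairForm c₁ c₂ c₃ x w + pairForm (LinearMap.mul ℝ ℝ) d₁ d₂ d₃ (B e x) (B e w) := by
  rcases eq_or_ne e 0 with rfl | he
  · simpa [pairForm] using pairForm_pos hB hQ hc₁ hc hxw
  have hτ : 0 < B e e := hQ e he
  refine pos_of_mul_pos_right ?_ (sq_nonneg (B e e))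
  rw [sq_mul_pairForm_add_pairForm_mul hB]
  by_cases hXW : B e e • x - B e x • e ≠ 0 ∨ B e e • w - B e w • e ≠ 0
  · exact add_pos_of_pos_of_nonneg (pairForm_pos hB hQ hc₁ hc hXW)
      (mul_nonneg hτ.le (pairForm_nonneg isSymm_mul posDef_toQuadraticMap_mul hd₁ hd _ _))
  push Not at hXW
  obtain ⟨hX, hW⟩ := hXW
  have hab : B e x ≠ 0 ∨ B e w ≠ 0 := by
    contrapose! hxw
    rw [hxw.1, zero_smul, sub_zero, smul_eq_zero] at hX
    rw [hxw.2, zero_smul, sub_zero, smul_eq_zero] at hW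
    exact ⟨hX.resolve_left hτ.ne', hW.resolve_left hτ.ne'⟩
  rw [hX, hW]
  simpa [pairForm] using mul_pos hτ (pairForm_pos isSymm_mul posDef_toQuadraticMap_mul hd₁ hd hab)

end LinearMap.BilinForm

namespace Matrix

variable {m R : Type*} [Fintype m] [CommRing R]

omit [Fintype m] in
theorem isSymm_vecMulVec_self (v : m → R) : (vecMulVec v v).IsSymm :=
  transpose_vecMulVec v v

theorem sumElim_dotProduct_fromBlocks_transpose_mulVec (A C D : Matrix m m R) (x y : m → R) :
    Sum.elim x y ⬝ᵥ fromBlocks A C Cᵀ D *ᵥ Sum.elim x y =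
      x ⬝ᵥ A *ᵥ x + 2 * (x ⬝ᵥ C *ᵥ y) + y ⬝ᵥ D *ᵥ y := by
  rw [fromBlocks_mulVec, sumElim_dotProduct_sumElim, Sum.elim_comp_inl, Sum.elim_comp_inr,
    dotProduct_add, dotProduct_add, dotProduct_transpose_mulVec]
  ring

theorem dotProduct_vecMulVec_mulVec (x u v y : m → R) :
    x ⬝ᵥ vecMulVec u v *ᵥ y = (x ⬝ᵥ u) * (v ⬝ᵥ y) := by
  rw [vecMulVec_mulVec, op_smul_eq_smul, dotProduct_smul, smul_eq_mul, mul_comm]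

theorem inv_mulVec_mulVec [DecidableEq m] {A : Matrix m m R} (hA : IsUnit A.det) (v : m → R) :
    A⁻¹ *ᵥ (A *ᵥ v) = v := by
  rw [mulVec_mulVec, nonsing_inv_mul A hA, one_mulVec]

end Matrix

section NaturalLift

open Matrix LinearMap.BilinForm

variable {m : Type*} [Fintype m] [DecidableEq m]

/-- The natural lift metric on `T*M` at the covector `p`, in the coordinates `(dx, dp)`. -/
noncomputable def naturalLiftMetric (g : Matrix m m ℝ) (p : m → ℝ) (c₁ c₂ c₃ d₁ d₂ d₃ : ℝ) :
    Matrix (m ⊕ m) (m ⊕ m) ℝ :=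
  fromBlocks (c₁ • g + d₁ • vecMulVec p p) (c₃ • 1 + d₃ • vecMulVec p (g⁻¹ *ᵥ p))
    (c₃ • 1 + d₃ • vecMulVec p (g⁻¹ *ᵥ p))ᵀ (c₂ • g⁻¹ + d₂ • vecMulVec (g⁻¹ *ᵥ p) (g⁻¹ *ᵥ p))

theorem isHermitian_naturalLiftMetric {g : Matrix m m ℝ} (hg : g.IsSymm) (p : m → ℝ)
    (c₁ c₂ c₃ d₁ d₂ d₃ : ℝ) : (naturalLiftMetric g p c₁ c₂ c₃ d₁ d₂ d₃).IsHermitian := by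
  refine IsHermitian.fromBlocks ?_ (conjTranspose_eq_transpose_of_trivial _) ?_
  · exact isHermitian_iff_isSymm.2 ((hg.smul c₁).add ((isSymm_vecMulVec_self p).smul d₁))
  · exact isHermitian_iff_isSymm.2 ((hg.inv.smul c₂).add ((isSymm_vecMulVec_self _).smul d₂))

theorem sumElim_dotProduct_naturalLiftMetric_mulVec {g : Matrix m m ℝ} (hg : g.IsSymm)
    (hdet : IsUnit g.det) (q x w : m → ℝ) (c₁ c₂ c₃ d₁ d₂ d₃ : ℝ) :
    Sum.elim x (g *ᵥ w) ⬝ᵥ naturalLiftMetric g (g *ᵥ q) c₁ c₂ c₃ d₁ d₂ d₃ *ᵥ Sum.elim x (g *ᵥ w) =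
      (toBilin' g).pairForm c₁ c₂ c₃ x w +
        pairForm (LinearMap.mul ℝ ℝ) d₁ d₂ d₃ (toBilin' g q x) (toBilin' g q w) := by
  have hxq : x ⬝ᵥ g *ᵥ q = q ⬝ᵥ g *ᵥ x := by
    rw [dotProduct_mulVec, ← mulVec_transpose, hg.eq, dotProduct_comm]
  rw [naturalLiftMetric, sumElim_dotProduct_fromBlocks_transpose_mulVec]
  simp only [pairForm, add_mulVec, smul_mulVec, dotProduct_add, dotProduct_smul, smul_eq_mul,
    dotProduct_vecMulVec_mulVec, one_mulVec, inv_mulVec_mulVec hdet, LinearMap.mul_apply',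
    toBilin'_apply']
  rw [dotProduct_comm (g *ᵥ q), dotProduct_comm (g *ᵥ w) w, dotProduct_comm (g *ᵥ w) q, hxq]
  ring

theorem posDef_naturalLiftMetric {g : Matrix m m ℝ} (hg : g.PosDef) (p : m → ℝ)
    {c₁ c₂ c₃ d₁ d₂ d₃ : ℝ} (hc₁ : 0 < c₁) (hc : 0 < c₁ * c₂ - c₃ ^ 2)
    (hd₁ : 0 < c₁ + (p ⬝ᵥ g⁻¹ *ᵥ p) * d₁)
    (hd : 0 < (c₁ + (p ⬝ᵥ g⁻¹ *ᵥ p) * d₁) * (c₂ + (p ⬝ᵥ g⁻¹ *ᵥ p) * d₂) -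
      (c₃ + (p ⬝ᵥ g⁻¹ *ᵥ p) * d₃) ^ 2) :
    (naturalLiftMetric g p c₁ c₂ c₃ d₁ d₂ d₃).PosDef := by
  have hsym : g.IsSymm := isHermitian_iff_isSymm.1 hg.isHermitian
  have hdet : IsUnit g.det := (isUnit_iff_isUnit_det g).1 hg.isUnit
  have hgg : g * g⁻¹ = 1 := mul_nonsing_inv g hdet
  obtain ⟨q, rfl⟩ : ∃ q, p = g *ᵥ q := ⟨g⁻¹ *ᵥ p, by rw [mulVec_mulVec, hgg, one_mulVec]⟩
  have hτ : g *ᵥ q ⬝ᵥ g⁻¹ *ᵥ (g *ᵥ q) = toBilin' g q q := by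
    rw [inv_mulVec_mulVec hdet, toBilin'_apply', dotProduct_comm]
  rw [hτ] at hd₁ hd
  refine .of_dotProduct_mulVec_pos (isHermitian_naturalLiftMetric hsym _ _ _ _ _ _ _)
    fun z hz => ?_
  obtain ⟨x, w, rfl⟩ : ∃ x w, z = Sum.elim x (g *ᵥ w) :=
    ⟨z ∘ Sum.inl, g⁻¹ *ᵥ (z ∘ Sum.inr), by
      rw [mulVec_mulVec, hgg, one_mulVec, Sum.elim_comp_inl_inr]⟩
  have hxw : x ≠ 0 ∨ w ≠ 0 := by
    contrapose! hz
    rw [hz.1, hz.2, mulVec_zero, Sum.elim_zero_zero]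
  rw [star_trivial, sumElim_dotProduct_naturalLiftMetric_mulVec hsym hdet]
  exact pairForm_add_pairForm_mul_pos ((isSymm_toBilin'_iff_isSymm).2 hsym) hg.toQuadraticForm' q
    hc₁ hc hd₁ hd hxw

end NaturalLift

theorem stmt_18_general (n : ℕ) (g : Matrix (Fin n) (Fin n) ℝ)
    (hg : g.PosDef) (p : Fin n → ℝ)
    (c1 c2 c3 d1 d2 d3 : ℝ)
    (t : ℝ) (ht : t = (1 / 2) * (p ⬝ᵥ g⁻¹.mulVec p))
    (h1 : 0 < c1 + 2 * t * d1)
    (h3 : 0 < (c1 + 2 * t * d1) * (c2 + 2 * t * d2) - (c3 + 2 * t * d3) ^ 2)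
    (hc1 : 0 < c1) (hc3 : 0 < c1 * c2 - c3 ^ 2) :
    (Matrix.fromBlocks
      (c1 • g + d1 • Matrix.vecMulVec p p)
      (c3 • (1 : Matrix (Fin n) (Fin n) ℝ) + d3 • Matrix.vecMulVec p (g⁻¹.mulVec p))
      (c3 • (1 : Matrix (Fin n) (Fin n) ℝ) + d3 • Matrix.vecMulVec p (g⁻¹.mulVec p))ᵀ
      (c2 • g⁻¹ + d2 • Matrix.vecMulVec (g⁻¹.mulVec p) (g⁻¹.mulVec p))).PosDef := by
  have h2t : 2 * t = p ⬝ᵥ g⁻¹ *ᵥ p := by rw [ht]; ring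
  rw [h2t] at h1 h3
  exact posDef_naturalLiftMetric hg p hc1 hc3 h1 h3

theorem stmt_18 (n : ℕ) (hn : 1 ≤ n) (g : Matrix (Fin n) (Fin n) ℝ)
    (hg : g.PosDef) (hsym : g.IsSymm) (p : Fin n → ℝ)
    (c1 c2 c3 d1 d2 d3 : ℝ)
    (t : ℝ) (ht : t = (1 / 2) * (p ⬝ᵥ g⁻¹.mulVec p))
    (h1 : 0 < c1 + 2 * t * d1) (h2 : 0 < c2 + 2 * t * d2)
    (h3 : 0 < (c1 + 2 * t * d1) * (c2 + 2 * t * d2) - (c3 + 2 * t * d3) ^ 2)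
    (hc1 : 0 < c1) (hc2 : 0 < c2) (hc3 : 0 < c1 * c2 - c3 ^ 2) :
    (Matrix.fromBlocks
      (c1 • g + d1 • Matrix.vecMulVec p p)
      (c3 • (1 : Matrix (Fin n) (Fin n) ℝ) + d3 • Matrix.vecMulVec p (g⁻¹.mulVec p))
      (c3 • (1 : Matrix (Fin n) (Fin n) ℝ) + d3 • Matrix.vecMulVec p (g⁻¹.mulVec p))ᵀ
      (c2 • g⁻¹ + d2 • Matrix.vecMulVec (g⁻¹.mulVec p) (g⁻¹.mulVec p))).PosDef :=
  stmt_18_general n g hg p c1 c2 c3 d1 d2 d3 t ht h1 h3 hc1 hc3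
end

section
/- Let a1, a2, a3, b1, b2, b3 : [0,∞) → R be differentiable, with a1 > 0, a1+2t·b1 > 0, satisfying a1·a2 = 1+a3² and (a1+2t·b1)(a2+2t·b2) = 1+(a3+2t·b3)² for all t. Let c ∈ R and suppose a1′ = (a1·b1 + c(1−3a3²−4t·a3·b3))/(a1+2t·b1), a3′ = (a1·b3 − 2c·a2·(a3+t·b3))/(a1+2t·b1), a2′ = (2a3·b3 − a2·b1 − c·a2²)/(a1+2t·b1) for all t. Then at t = 0: c = (a1(0)/a2(0)²)·(b2(0) − a2′(0)). -/
/-! Expanding the second algebraic constraint in `t` and subtracting the first leaves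
`2t (a₁b₂ + a₂b₁ - 2a₃b₃) + 4t² (b₁b₂ - b₃²) = 0` for `t > 0`; by continuity the cross term
`a₁b₂ + a₂b₁ - 2a₃b₃` vanishes at `t = 0`. The ODE for `a₂` at `t = 0` then reads
`a₁ a₂' = 2a₃b₃ - a₂b₁ - c a₂² = a₁b₂ - c a₂²`, which is solved for `c` since `a₁a₂ = 1 + a₃² > 0`. -/

open Set Filter

lemma cross_add_mul_eq_zero {x₁ x₂ x₃ y₁ y₂ y₃ t : ℝ} (ht : t ≠ 0)
    (hx : x₁ * x₂ = 1 + x₃ ^ 2)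
    (hxy : (x₁ + 2 * t * y₁) * (x₂ + 2 * t * y₂) = 1 + (x₃ + 2 * t * y₃) ^ 2) :
    x₁ * y₂ + x₂ * y₁ - 2 * x₃ * y₃ + 2 * t * (y₁ * y₂ - y₃ ^ 2) = 0 := by
  have h : (2 * t) * (x₁ * y₂ + x₂ * y₁ - 2 * x₃ * y₃ + 2 * t * (y₁ * y₂ - y₃ ^ 2)) = 0 := by
    linear_combination hxy - hx
  exact (mul_eq_zero.mp h).resolve_left (mul_ne_zero two_ne_zero ht)

lemma eq_of_continuousWithinAt_Ici_of_forall_gt {X Y : Type*} [TopologicalSpace X]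
    [LinearOrder X] [OrderTopology X] [DenselyOrdered X] [NoMaxOrder X]
    [TopologicalSpace Y] [T2Space Y] {f : X → Y} {a : X} {b : Y}
    (hf : ContinuousWithinAt f (Ici a) a) (h : ∀ t > a, f t = b) : f a = b :=
  tendsto_nhds_unique ((hf.mono Ioi_subset_Ici_self).tendsto)
    (tendsto_const_nhds.congr' (eventually_nhdsWithin_of_forall fun t ht => (h t ht).symm))

lemma cross_term_eq_zero {a₁ a₂ a₃ b₁ b₂ b₃ : ℝ → ℝ}
    (h₁ : ContinuousWithinAt a₁ (Ici 0) 0) (h₂ : ContinuousWithinAt a₂ (Ici 0) 0)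
    (h₃ : ContinuousWithinAt a₃ (Ici 0) 0) (k₁ : ContinuousWithinAt b₁ (Ici 0) 0)
    (k₂ : ContinuousWithinAt b₂ (Ici 0) 0) (k₃ : ContinuousWithinAt b₃ (Ici 0) 0)
    (ha : ∀ t ∈ Ici (0 : ℝ), a₁ t * a₂ t = 1 + a₃ t ^ 2)
    (hab : ∀ t ∈ Ici (0 : ℝ),
      (a₁ t + 2 * t * b₁ t) * (a₂ t + 2 * t * b₂ t) = 1 + (a₃ t + 2 * t * b₃ t) ^ 2) :
    a₁ 0 * b₂ 0 + a₂ 0 * b₁ 0 - 2 * a₃ 0 * b₃ 0 = 0 := by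
  have hcont : ContinuousWithinAt (fun t => a₁ t * b₂ t + a₂ t * b₁ t - 2 * a₃ t * b₃ t
      + 2 * t * (b₁ t * b₂ t - b₃ t ^ 2)) (Ici 0) 0 := by
    have hid : ContinuousWithinAt (fun t : ℝ => t) (Ici 0) 0 := continuousWithinAt_id
    exact ((h₁.mul k₂).add (h₂.mul k₁) |>.sub ((continuousWithinAt_const.mul h₃).mul k₃)).add
      ((continuousWithinAt_const.mul hid).mul ((k₁.mul k₂).sub (k₃.pow 2)))
  simpa using eq_of_continuousWithinAt_Ici_of_forall_gt hcont fun t ht =>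
    cross_add_mul_eq_zero ht.ne' (ha t ht.le) (hab t ht.le)

theorem stmt_19_general (a1 a2 a3 b1 b2 b3 : ℝ → ℝ)
    (hd1 : DifferentiableOn ℝ a1 (Set.Ici 0))
    (hd2 : DifferentiableOn ℝ a2 (Set.Ici 0))
    (hd3 : DifferentiableOn ℝ a3 (Set.Ici 0))
    (hd4 : DifferentiableOn ℝ b1 (Set.Ici 0))
    (hd5 : DifferentiableOn ℝ b2 (Set.Ici 0))
    (hd6 : DifferentiableOn ℝ b3 (Set.Ici 0))
    (hpos1 : ∀ t ∈ Set.Ici (0:ℝ), 0 < a1 t)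
    (halg1 : ∀ t ∈ Set.Ici (0:ℝ), a1 t * a2 t = 1 + a3 t ^ 2)
    (halg2 : ∀ t ∈ Set.Ici (0:ℝ),
      (a1 t + 2 * t * b1 t) * (a2 t + 2 * t * b2 t) = 1 + (a3 t + 2 * t * b3 t) ^ 2)
    (c : ℝ)
    (hode2 : ∀ t ∈ Set.Ici (0:ℝ), derivWithin a2 (Set.Ici 0) t =
      (2 * a3 t * b3 t - a2 t * b1 t - c * a2 t ^ 2) / (a1 t + 2 * t * b1 t)) :
    c = a1 0 / a2 0 ^ 2 * (b2 0 - derivWithin a2 (Set.Ici 0) 0) := by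
  have h0 : (0 : ℝ) ∈ Ici 0 := self_mem_Ici
  have hcross := cross_term_eq_zero (hd1.continuousOn 0 h0) (hd2.continuousOn 0 h0)
    (hd3.continuousOn 0 h0) (hd4.continuousOn 0 h0) (hd5.continuousOn 0 h0)
    (hd6.continuousOn 0 h0) halg1 halg2
  have ha1 : 0 < a1 0 := hpos1 0 h0
  have ha2 : 0 < a2 0 := by nlinarith [halg1 0 h0, sq_nonneg (a3 0)]
  rw [hode2 0 h0, mul_zero, zero_mul, add_zero]
  field_simp
  linear_combination -hcross

theorem stmt_19 (a1 a2 a3 b1 b2 b3 : ℝ → ℝ)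
    (hd1 : DifferentiableOn ℝ a1 (Set.Ici 0))
    (hd2 : DifferentiableOn ℝ a2 (Set.Ici 0))
    (hd3 : DifferentiableOn ℝ a3 (Set.Ici 0))
    (hd4 : DifferentiableOn ℝ b1 (Set.Ici 0))
    (hd5 : DifferentiableOn ℝ b2 (Set.Ici 0))
    (hd6 : DifferentiableOn ℝ b3 (Set.Ici 0))
    (hpos1 : ∀ t ∈ Set.Ici (0:ℝ), 0 < a1 t)
    (hpos2 : ∀ t ∈ Set.Ici (0:ℝ), 0 < a1 t + 2 * t * b1 t)
    (halg1 : ∀ t ∈ Set.Ici (0:ℝ), a1 t * a2 t = 1 + a3 t ^ 2)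
    (halg2 : ∀ t ∈ Set.Ici (0:ℝ),
      (a1 t + 2 * t * b1 t) * (a2 t + 2 * t * b2 t) = 1 + (a3 t + 2 * t * b3 t) ^ 2)
    (c : ℝ)
    (hode1 : ∀ t ∈ Set.Ici (0:ℝ), derivWithin a1 (Set.Ici 0) t =
      (a1 t * b1 t + c * (1 - 3 * a3 t ^ 2 - 4 * t * a3 t * b3 t)) /
        (a1 t + 2 * t * b1 t))
    (hode3 : ∀ t ∈ Set.Ici (0:ℝ), derivWithin a3 (Set.Ici 0) t =
      (a1 t * b3 t - 2 * c * a2 t * (a3 t + t * b3 t)) / (a1 t + 2 * t * b1 t))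
    (hode2 : ∀ t ∈ Set.Ici (0:ℝ), derivWithin a2 (Set.Ici 0) t =
      (2 * a3 t * b3 t - a2 t * b1 t - c * a2 t ^ 2) / (a1 t + 2 * t * b1 t)) :
    c = a1 0 / a2 0 ^ 2 * (b2 0 - derivWithin a2 (Set.Ici 0) 0) :=
  stmt_19_general a1 a2 a3 b1 b2 b3 hd1 hd2 hd3 hd4 hd5 hd6 hpos1 halg1 halg2 c hode2
end
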